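/- arXiv:2605.07531 — 3 statements merged into one kernel-verified Lean document; each statement's English description precedes it below -/
import Mathlib

section
/- Let f : ℝ^d → ℝ be continuous with quadratic growth (there exist c₁ > 0 and c₂ ∈ ℝ with f(x) ≥ c₁‖x‖² - c₂ for all x), and let p be a standardized, spherically symmetric probability density on ℝ^d. Then the function L(μ,Σ) = E_{z∼p}[f(μ + Σz)] - log|det Σ| attains a global minimum on ℝ^d × S^d_{++}. -/
/-!
Standardization of `p` gives `E[(μ + Σz)ᵢ²] = μᵢ² + ∑ⱼ Σᵢⱼ²`, so quadratic growth yields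
`E[f(μ + Σz)] ≥ c₁ (‖μ‖² + ‖Σ‖_F²) - c₂`, while `log det Σ ≤ tr Σ ≤ (c₁/2) ‖Σ‖_F² + d/(2c₁)`.
Hence on a sublevel set `{L ≤ M}` both `‖μ‖² + ‖Σ‖_F²` and `-log det Σ` are bounded: the sublevel
set lies in a compact set of parameters whose determinant is bounded away from `0`, hence
inside the positive definite cone. There `L` is lower semicontinuous by Fatou's lemma (`f` is
bounded below), so it attains its minimum.
-/

open MeasureTheory Filter Topology Matrix

namespace Matrix

variable {n : Type*} [Fintype n]

theorem isClosed_setOf_posSemidef : IsClosed {A : Matrix n n ℝ | A.PosSemidef} := by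
  simp only [posSemidef_iff_dotProduct_mulVec, Set.ofPred_and, Set.ofPred_forall]
  exact (isClosed_eq continuous_id.matrix_conjTranspose continuous_id).inter <|
    isClosed_iInter fun v => isClosed_le continuous_const <|
      continuous_const.dotProduct (continuous_id.matrix_mulVec continuous_const)

variable [DecidableEq n]

theorem PosDef.log_det_le_trace {A : Matrix n n ℝ} (hA : A.PosDef) :
    Real.log A.det ≤ A.trace := by
  simp only [hA.isHermitian.det_eq_prod_eigenvalues, hA.isHermitian.trace_eq_sum_eigenvalues,
    RCLike.ofReal_real_eq_id, id]
  rw [Real.log_prod fun i _ => (hA.eigenvalues_pos i).ne']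
  exact Finset.sum_le_sum fun i _ => Real.log_le_self (hA.eigenvalues_pos i).le

theorem PosDef.log_det_le_sum_sq {A : Matrix n n ℝ} (hA : A.PosDef) {c : ℝ} (hc : 0 < c) :
    Real.log A.det ≤ c / 2 * ∑ i, ∑ j, A i j ^ 2 + Fintype.card n / (2 * c) := by
  have young (t : ℝ) : t ≤ c / 2 * t ^ 2 + 1 / (2 * c) := by
    have h : c / 2 * t ^ 2 + 1 / (2 * c) - t = (c * t - 1) ^ 2 / (2 * c) := by
      field_simp
      ring
    linarith [div_nonneg (sq_nonneg (c * t - 1)) (by positivity : (0 : ℝ) ≤ 2 * c)]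
  have diag_le : ∑ i, A i i ^ 2 ≤ ∑ i, ∑ j, A i j ^ 2 := Finset.sum_le_sum fun i _ =>
    Finset.single_le_sum (f := fun j => A i j ^ 2) (fun _ _ => sq_nonneg _) (Finset.mem_univ i)
  calc Real.log A.det ≤ ∑ i, A i i := hA.log_det_le_trace
    _ ≤ ∑ i, (c / 2 * A i i ^ 2 + 1 / (2 * c)) := Finset.sum_le_sum fun i _ => young _
    _ = c / 2 * ∑ i, A i i ^ 2 + Fintype.card n / (2 * c) := by
      rw [Finset.sum_add_distrib, ← Finset.mul_sum, Finset.sum_const, Finset.card_univ,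
        nsmul_eq_mul, mul_one_div]
    _ ≤ _ := by gcongr

end Matrix

theorem isCompact_setOf_sum_sq_le {ι : Type*} [Fintype ι] (R : ℝ) :
    IsCompact {v : ι → ℝ | ∑ i, v i ^ 2 ≤ R} := by
  refine Metric.isCompact_of_isClosed_isBounded
    (isClosed_le (by fun_prop) continuous_const) ?_
  refine (Metric.isBounded_iff_subset_closedBall 0).2 ⟨√R, fun v hv => ?_⟩
  rw [mem_closedBall_zero_iff, pi_norm_le_iff_of_nonneg (Real.sqrt_nonneg R)]
  intro i
  rw [Real.norm_eq_abs]
  exact Real.abs_le_sqrt <| (Finset.single_le_sum (f := fun i => v i ^ 2)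
    (fun _ _ => sq_nonneg _) (Finset.mem_univ i)).trans hv

theorem isCompact_setOf_sum_sq_add_sum_sum_sq_le {κ ι : Type*} [Fintype κ] [Fintype ι] (R : ℝ) :
    IsCompact {x : (κ → ℝ) × Matrix κ ι ℝ | ∑ i, x.1 i ^ 2 + ∑ i, ∑ j, x.2 i j ^ 2 ≤ R} := by
  have hclosed : IsClosed {x : (κ → ℝ) × Matrix κ ι ℝ |
      ∑ i, x.1 i ^ 2 + ∑ i, ∑ j, x.2 i j ^ 2 ≤ R} :=
    isClosed_le (by fun_prop) continuous_const
  refine ((isCompact_setOf_sum_sq_le R).prod (isCompact_univ_pi fun _ =>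
    isCompact_setOf_sum_sq_le R)).of_isClosed_subset hclosed ?_
  rintro ⟨μ, S⟩ (h : ∑ i, μ i ^ 2 + ∑ i, ∑ j, S i j ^ 2 ≤ R)
  have hμ : 0 ≤ ∑ i, μ i ^ 2 := by positivity
  have hS : 0 ≤ ∑ i, ∑ j, S i j ^ 2 := by positivity
  refine ⟨show ∑ i, μ i ^ 2 ≤ R by linarith, fun i _ => ?_⟩
  have hrow : ∑ j, S i j ^ 2 ≤ ∑ i, ∑ j, S i j ^ 2 := Finset.single_le_sum
    (f := fun i => ∑ j, S i j ^ 2) (fun _ _ => by positivity) (Finset.mem_univ i)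
  show ∑ j, S i j ^ 2 ≤ R
  linarith

theorem dotProduct_mul_eq_sum {ι : Type*} [Fintype ι] (v z : ι → ℝ) (c : ℝ) :
    v ⬝ᵥ z * c = ∑ i, v i * (z i * c) := by
  simp only [dotProduct, Finset.sum_mul, mul_assoc]

theorem dotProduct_sq_mul_eq_sum {ι : Type*} [Fintype ι] (v z : ι → ℝ) (c : ℝ) :
    (v ⬝ᵥ z) ^ 2 * c = ∑ i, ∑ j, v i * v j * (z i * z j * c) := by
  rw [sq, dotProduct, Finset.sum_mul_sum, Finset.sum_mul]
  refine Finset.sum_congr rfl fun i _ => ?_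
  rw [Finset.sum_mul]
  exact Finset.sum_congr rfl fun j _ => by ring

structure IsStandardizedDensity {ι : Type*} [Fintype ι] (p : (ι → ℝ) → ℝ) : Prop where
  nonneg : ∀ z, 0 ≤ p z
  integrable : Integrable p
  integral_eq_one : ∫ z, p z = 1
  integrable_mul : ∀ i, Integrable fun z => z i * p z
  integrable_mul_mul : ∀ i j, Integrable fun z => z i * z j * p z
  integral_mul : ∀ i, ∫ z, z i * p z = 0
  integral_sq_mul : ∀ i, ∫ z, z i ^ 2 * p z = 1
  integral_mul_mul_of_ne : ∀ i j, i ≠ j → ∫ z, z i * z j * p z = 0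

namespace IsStandardizedDensity

variable {ι : Type*} [Fintype ι] {p : (ι → ℝ) → ℝ}

theorem integral_mul_mul [DecidableEq ι] (hp : IsStandardizedDensity p) (i j : ι) :
    ∫ z, z i * z j * p z = if i = j then 1 else 0 := by
  split_ifs with h
  · subst h
    simpa only [sq] using hp.integral_sq_mul i
  · exact hp.integral_mul_mul_of_ne i j h

theorem integrable_dotProduct_mul (hp : IsStandardizedDensity p) (v : ι → ℝ) :
    Integrable fun z => v ⬝ᵥ z * p z := by
  simp only [dotProduct_mul_eq_sum]
  exact integrable_finsetSum _ fun i _ => (hp.integrable_mul i).const_mul _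

theorem integral_dotProduct_mul (hp : IsStandardizedDensity p) (v : ι → ℝ) :
    ∫ z, v ⬝ᵥ z * p z = 0 := by
  simp only [dotProduct_mul_eq_sum]
  rw [integral_finsetSum _ fun i _ => (hp.integrable_mul i).const_mul _]
  simp [integral_const_mul, hp.integral_mul]

theorem integrable_dotProduct_sq_mul (hp : IsStandardizedDensity p) (v : ι → ℝ) :
    Integrable fun z => (v ⬝ᵥ z) ^ 2 * p z := by
  simp only [dotProduct_sq_mul_eq_sum]
  exact integrable_finsetSum _ fun i _ => integrable_finsetSum _ fun j _ =>
    (hp.integrable_mul_mul i j).const_mul _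

theorem integral_dotProduct_sq_mul (hp : IsStandardizedDensity p) (v : ι → ℝ) :
    ∫ z, (v ⬝ᵥ z) ^ 2 * p z = ∑ i, v i ^ 2 := by
  classical
  simp only [dotProduct_sq_mul_eq_sum]
  rw [integral_finsetSum _ fun i _ => integrable_finsetSum _ fun j _ =>
    (hp.integrable_mul_mul i j).const_mul _]
  refine Finset.sum_congr rfl fun i _ => ?_
  rw [integral_finsetSum _ fun j _ => (hp.integrable_mul_mul i j).const_mul _]
  simp [integral_const_mul, hp.integral_mul_mul, sq]

theorem integrable_add_dotProduct_sq_mul (hp : IsStandardizedDensity p) (a : ℝ) (v : ι → ℝ) :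
    Integrable fun z => (a + v ⬝ᵥ z) ^ 2 * p z := by
  have hexpand (z : ι → ℝ) : (a + v ⬝ᵥ z) ^ 2 * p z
      = a ^ 2 * p z + 2 * a * (v ⬝ᵥ z * p z) + (v ⬝ᵥ z) ^ 2 * p z := by ring
  simp only [hexpand]
  exact ((hp.integrable.const_mul _).add ((hp.integrable_dotProduct_mul v).const_mul _)).add
    (hp.integrable_dotProduct_sq_mul v)

theorem integral_add_dotProduct_sq_mul (hp : IsStandardizedDensity p) (a : ℝ) (v : ι → ℝ) :
    ∫ z, (a + v ⬝ᵥ z) ^ 2 * p z = a ^ 2 + ∑ i, v i ^ 2 := by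
  have h₀ : Integrable fun z => a ^ 2 * p z := hp.integrable.const_mul _
  have h₁ : Integrable fun z => 2 * a * (v ⬝ᵥ z * p z) :=
    (hp.integrable_dotProduct_mul v).const_mul _
  have h₀₁ : Integrable fun z => a ^ 2 * p z + 2 * a * (v ⬝ᵥ z * p z) := h₀.add h₁
  have hexpand (z : ι → ℝ) : (a + v ⬝ᵥ z) ^ 2 * p z
      = a ^ 2 * p z + 2 * a * (v ⬝ᵥ z * p z) + (v ⬝ᵥ z) ^ 2 * p z := by ring
  simp only [hexpand]
  rw [integral_add h₀₁ (hp.integrable_dotProduct_sq_mul v), integral_add h₀ h₁,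
    integral_const_mul, integral_const_mul, hp.integral_eq_one, hp.integral_dotProduct_mul,
    hp.integral_dotProduct_sq_mul]
  ring

theorem le_integral_comp_affine_mul {κ : Type*} [Fintype κ]
    (hp : IsStandardizedDensity p) {f : (κ → ℝ) → ℝ} {c₁ c₂ : ℝ}
    (hgrowth : ∀ x, c₁ * ∑ i, x i ^ 2 - c₂ ≤ f x) {μ : κ → ℝ} {S : Matrix κ ι ℝ}
    (hint : Integrable fun z => f (μ + S *ᵥ z) * p z) :
    c₁ * (∑ i, μ i ^ 2 + ∑ i, ∑ j, S i j ^ 2) - c₂ ≤ ∫ z, f (μ + S *ᵥ z) * p z := by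
  have hsq : Integrable fun z => ∑ i, (μ i + S i ⬝ᵥ z) ^ 2 * p z :=
    integrable_finsetSum _ fun i _ => hp.integrable_add_dotProduct_sq_mul _ _
  have hminorant (z : ι → ℝ) : (c₁ * ∑ i, (μ + S *ᵥ z) i ^ 2 - c₂) * p z
      = c₁ * ∑ i, (μ i + S i ⬝ᵥ z) ^ 2 * p z - c₂ * p z := by
    rw [sub_mul, mul_assoc, Finset.sum_mul]
    rfl
  calc c₁ * (∑ i, μ i ^ 2 + ∑ i, ∑ j, S i j ^ 2) - c₂
      = ∫ z, c₁ * ∑ i, (μ i + S i ⬝ᵥ z) ^ 2 * p z - c₂ * p z := by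
        rw [integral_sub (hsq.const_mul _) (hp.integrable.const_mul _), integral_const_mul,
          integral_const_mul, integral_finsetSum (f := fun i z => (μ i + S i ⬝ᵥ z) ^ 2 * p z) _
            fun i _ => hp.integrable_add_dotProduct_sq_mul _ _, hp.integral_eq_one]
        simp only [hp.integral_add_dotProduct_sq_mul, Finset.sum_add_distrib, mul_one]
    _ ≤ ∫ z, f (μ + S *ᵥ z) * p z :=
      integral_mono ((hsq.const_mul _).sub (hp.integrable.const_mul _)) hint fun z => by
        rw [← hminorant]
        exact mul_le_mul_of_nonneg_right (hgrowth _) (hp.nonneg z)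

end IsStandardizedDensity

section Fatou

variable {α X : Type*} [MeasurableSpace α] {ν : Measure α} [TopologicalSpace X]
  [FirstCountableTopology X]

theorem lowerSemicontinuous_lintegral {F : X → α → ENNReal}
    (hF : ∀ a, LowerSemicontinuous fun x => F x a) (hmeas : ∀ x, AEMeasurable (F x) ν) :
    LowerSemicontinuous fun x => ∫⁻ a, F x a ∂ν := by
  refine lowerSemicontinuous_iff_le_liminf.2 fun x => ?_
  calc ∫⁻ a, F x a ∂ν ≤ ∫⁻ a, liminf (fun y => F y a) (𝓝 x) ∂ν :=
        lintegral_mono fun a => (hF a).le_liminf x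
    _ ≤ liminf (fun y => ∫⁻ a, F y a ∂ν) (𝓝 x) := lintegral_liminf_le' hmeas

theorem lowerSemicontinuousOn_integral_of_nonneg {F : X → α → ℝ} {s : Set X}
    (hF : ∀ a, LowerSemicontinuous fun x => F x a) (hmeas : ∀ x, AEStronglyMeasurable (F x) ν)
    (hnonneg : ∀ x, 0 ≤ᵐ[ν] F x) (hint : ∀ x ∈ s, Integrable (F x) ν) :
    LowerSemicontinuousOn (fun x => ∫ a, F x a ∂ν) s := by
  have hlint : LowerSemicontinuous fun x => ∫⁻ a, ENNReal.ofReal (F x a) ∂ν :=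
    lowerSemicontinuous_lintegral
      (fun a => ENNReal.continuous_ofReal.comp_lowerSemicontinuous (hF a) ENNReal.ofReal_mono)
      fun x => (hmeas x).aemeasurable.ennreal_ofReal
  simp only [integral_eq_lintegral_of_nonneg_ae (hnonneg _) (hmeas _)]
  intro x hx y hy
  rcases lt_or_ge y 0 with hy₀ | hy₀
  · exact Eventually.of_forall fun _ => hy₀.trans_le ENNReal.toReal_nonneg
  · have hlt := (ENNReal.ofReal_lt_iff_lt_toReal hy₀ (hint x hx).lintegral_lt_top.ne).2 hy
    filter_upwards [mem_nhdsWithin_of_mem_nhds (hlint x _ hlt), self_mem_nhdsWithin]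
      with x' hx' hx's
    exact (ENNReal.ofReal_lt_iff_lt_toReal hy₀ (hint x' hx's).lintegral_lt_top.ne).1 hx'

theorem lowerSemicontinuousOn_integral_of_ge {F : X → α → ℝ} {g : α → ℝ} {s : Set X}
    (hF : ∀ a, LowerSemicontinuous fun x => F x a) (hmeas : ∀ x, AEStronglyMeasurable (F x) ν)
    (hg : Integrable g ν) (hge : ∀ x, g ≤ᵐ[ν] F x) (hint : ∀ x ∈ s, Integrable (F x) ν) :
    LowerSemicontinuousOn (fun x => ∫ a, F x a ∂ν) s := by
  have hshift : LowerSemicontinuousOn (fun x => ∫ a, F x a - g a ∂ν) s :=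
    lowerSemicontinuousOn_integral_of_nonneg (fun a => (hF a).add lowerSemicontinuous_const)
      (fun x => (hmeas x).sub hg.aestronglyMeasurable)
      (fun x => (hge x).mono fun a h => sub_nonneg.2 h) fun x hx => (hint x hx).sub hg
  have hconst : LowerSemicontinuousOn (fun _ : X => ∫ a, g a ∂ν) s := lowerSemicontinuousOn_const
  intro x hx
  refine LowerSemicontinuousWithinAt.congr_of_eventuallyEq ((hshift.add hconst) x hx) hx
    (eventually_nhdsWithin_of_forall fun y hy => ?_)
  simp only [integral_sub (hint y hy) hg, sub_add_cancel]

end Fatou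

theorem lowerSemicontinuousOn_integral_comp_affine_mul {ι κ : Type*} [Fintype ι] [Fintype κ]
    {f : (κ → ℝ) → ℝ} {p : (ι → ℝ) → ℝ} {c : ℝ} {s : Set ((κ → ℝ) × Matrix κ ι ℝ)}
    (hf : Continuous f) (hf_ge : ∀ x, c ≤ f x) (hp_nonneg : ∀ z, 0 ≤ p z) (hp : Integrable p)
    (hint : ∀ x ∈ s, Integrable fun z => f (x.1 + x.2 *ᵥ z) * p z) :
    LowerSemicontinuousOn (fun x => ∫ z, f (x.1 + x.2 *ᵥ z) * p z) s := by
  have : FirstCountableTopology (Matrix κ ι ℝ) :=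
    inferInstanceAs (FirstCountableTopology (κ → ι → ℝ))
  refine lowerSemicontinuousOn_integral_of_ge (fun z => Continuous.lowerSemicontinuous ?_)
    (fun x => Continuous.aestronglyMeasurable ?_ |>.mul hp.aestronglyMeasurable)
    (hp.const_mul c) (fun x => ae_of_all _ fun z => ?_) hint
  · exact (hf.comp (continuous_fst.add (continuous_snd.matrix_mulVec continuous_const))).mul
      continuous_const
  · exact hf.comp (continuous_const.add (continuous_const.matrix_mulVec continuous_id))
  · exact mul_le_mul_of_nonneg_right (hf_ge _) (hp_nonneg z)

theorem IsCompact.exists_isMinOn_of_sublevel_subset {X β : Type*} [TopologicalSpace X]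
    [LinearOrder β] {s K : Set X} {g : X → β} {x₁ : X} (hK : IsCompact K) (hKs : K ⊆ s)
    (hg : LowerSemicontinuousOn g K) (hx₁ : x₁ ∈ s) (hsub : ∀ y ∈ s, g y ≤ g x₁ → y ∈ K) :
    ∃ x ∈ s, IsMinOn g s x := by
  have hx₁K := hsub x₁ hx₁ le_rfl
  obtain ⟨x, hxK, hmin⟩ := hg.exists_isMinOn ⟨x₁, hx₁K⟩ hK
  refine ⟨x, hKs hxK, fun y hy => ?_⟩
  rcases le_total (g y) (g x₁) with hy₁ | hy₁
  · exact hmin (hsub y hy hy₁)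
  · exact (hmin hx₁K).trans hy₁

section NegElbo

variable {ι : Type*} [Fintype ι] [DecidableEq ι]

noncomputable def negElbo (f p : (ι → ℝ) → ℝ) (x : (ι → ℝ) × Matrix ι ι ℝ) : ℝ :=
  (∫ z, f (x.1 + x.2 *ᵥ z) * p z) - Real.log x.2.det

def boundedParams (R δ : ℝ) : Set ((ι → ℝ) × Matrix ι ι ℝ) :=
  {x | ∑ i, x.1 i ^ 2 + ∑ i, ∑ j, x.2 i j ^ 2 ≤ R ∧ x.2.PosSemidef ∧ δ ≤ x.2.det}

theorem isCompact_boundedParams (R δ : ℝ) : IsCompact (boundedParams (ι := ι) R δ) := by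
  have hdet : IsClosed {x : (ι → ℝ) × Matrix ι ι ℝ | δ ≤ x.2.det} :=
    isClosed_le continuous_const continuous_snd.matrix_det
  exact (isCompact_setOf_sum_sq_add_sum_sum_sq_le R).inter_right
    ((Matrix.isClosed_setOf_posSemidef.preimage continuous_snd).inter hdet)

theorem boundedParams_subset_posDef {R δ : ℝ} (hδ : 0 < δ) :
    boundedParams (ι := ι) R δ ⊆ {x | x.2.PosDef} := fun _ ⟨_, hpsd, hdet⟩ =>
  hpsd.posDef_iff_det_ne_zero.2 (hδ.trans_le hdet).ne'

theorem lowerSemicontinuousOn_negElbo {f p : (ι → ℝ) → ℝ} {c : ℝ} (hf : Continuous f)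
    (hf_ge : ∀ x, c ≤ f x) (hp_nonneg : ∀ z, 0 ≤ p z) (hp : Integrable p)
    (hint : ∀ x : (ι → ℝ) × Matrix ι ι ℝ, x.2.PosDef →
      Integrable fun z => f (x.1 + x.2 *ᵥ z) * p z) :
    LowerSemicontinuousOn (negElbo f p) {x | x.2.PosDef} := by
  have hlog : ContinuousOn (fun x : (ι → ℝ) × Matrix ι ι ℝ => -Real.log x.2.det)
      {x | x.2.PosDef} :=
    (continuous_snd.matrix_det.continuousOn.log fun x hx => hx.det_pos.ne').neg
  have hsplit : negElbo f p = fun x => (∫ z, f (x.1 + x.2 *ᵥ z) * p z) + -Real.log x.2.det :=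
    funext fun x => sub_eq_add_neg _ _
  rw [hsplit]
  exact (lowerSemicontinuousOn_integral_comp_affine_mul hf hf_ge hp_nonneg hp hint).add
    hlog.lowerSemicontinuousOn

theorem mem_boundedParams_of_negElbo_le {f p : (ι → ℝ) → ℝ} (hp : IsStandardizedDensity p)
    {c₁ c₂ M : ℝ} (hc₁ : 0 < c₁) (hgrowth : ∀ x, c₁ * ∑ i, x i ^ 2 - c₂ ≤ f x)
    {x : (ι → ℝ) × Matrix ι ι ℝ} (hx : x.2.PosDef)
    (hint : Integrable fun z => f (x.1 + x.2 *ᵥ z) * p z) (hM : negElbo f p x ≤ M) :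
    x ∈ boundedParams (2 * (M + c₂ + Fintype.card ι / (2 * c₁)) / c₁)
      (Real.exp (-(M + c₂))) := by
  obtain ⟨μ, S⟩ := x
  have hI := hp.le_integral_comp_affine_mul hgrowth hint
  have hlog := hx.log_det_le_sum_sq hc₁
  have hμ : 0 ≤ c₁ * ∑ i, μ i ^ 2 := by positivity
  have hS : 0 ≤ c₁ * ∑ i, ∑ j, S i j ^ 2 := by positivity
  unfold negElbo at hM
  refine ⟨?_, hx.posSemidef, ?_⟩
  · rw [le_div_iff₀ hc₁]
    linarith
  · exact (Real.le_log_iff_exp_le hx.det_pos).1 (by linarith)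

end NegElbo

theorem stmt5_general (d : ℕ) (f : (Fin d → ℝ) → ℝ) (hf : Continuous f)
    (c₁ c₂ : ℝ) (hc₁ : 0 < c₁)
    (hgrowth : ∀ x : Fin d → ℝ, c₁ * (∑ i, (x i) ^ 2) - c₂ ≤ f x)
    (p : (Fin d → ℝ) → ℝ)
    (hp_nonneg : ∀ x, 0 ≤ p x) (hp_pdf : ∫ x, p x = 1) (hp_int : Integrable p)
    (hint1 : ∀ i : Fin d, Integrable (fun z : Fin d → ℝ => z i * p z))
    (hint2 : ∀ i j : Fin d, Integrable (fun z : Fin d → ℝ => z i * z j * p z))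
    (hmean : ∀ i : Fin d, ∫ z : Fin d → ℝ, z i * p z = 0)
    (hvar : ∀ i : Fin d, ∫ z : Fin d → ℝ, (z i) ^ 2 * p z = 1)
    (hcov : ∀ i j : Fin d, i ≠ j → ∫ z : Fin d → ℝ, z i * z j * p z = 0)
    (hfint : ∀ (μ : Fin d → ℝ) (S : Matrix (Fin d) (Fin d) ℝ), S.PosDef →
      Integrable (fun z : Fin d → ℝ => f (μ + S.mulVec z) * p z)) :
    ∃ (μs : Fin d → ℝ) (Ss : Matrix (Fin d) (Fin d) ℝ), Ss.PosDef ∧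
      ∀ (μ : Fin d → ℝ) (S : Matrix (Fin d) (Fin d) ℝ), S.PosDef →
        (∫ z : Fin d → ℝ, f (μs + Ss.mulVec z) * p z) - Real.log Ss.det
          ≤ (∫ z : Fin d → ℝ, f (μ + S.mulVec z) * p z) - Real.log S.det := by
  have hp : IsStandardizedDensity p :=
    ⟨hp_nonneg, hp_int, hp_pdf, hint1, hint2, hmean, hvar, hcov⟩
  have hf_ge (x : Fin d → ℝ) : -c₂ ≤ f x := by
    have : 0 ≤ c₁ * ∑ i, x i ^ 2 := by positivity
    linarith [hgrowth x]
  have hint (x : (Fin d → ℝ) × Matrix (Fin d) (Fin d) ℝ) (hx : x.2.PosDef) :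
      Integrable fun z => f (x.1 + x.2 *ᵥ z) * p z := hfint x.1 x.2 hx
  set M := negElbo f p (0, 1)
  have hK := boundedParams_subset_posDef (ι := Fin d) (R := 2 * (M + c₂ + d / (2 * c₁)) / c₁)
    (Real.exp_pos (-(M + c₂)))
  obtain ⟨x, hx, hmin⟩ := (isCompact_boundedParams _ _).exists_isMinOn_of_sublevel_subset hK
    ((lowerSemicontinuousOn_negElbo hf hf_ge hp_nonneg hp_int hint).mono hK) Matrix.PosDef.one
    fun y hy hyM => by
      simpa only [Fintype.card_fin] using
        mem_boundedParams_of_negElbo_le hp hc₁ hgrowth hy (hint y hy) hyM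
  exact ⟨x.1, x.2, hx, fun μ S hS => hmin (show (μ, S) ∈ {x | x.2.PosDef} from hS)⟩

/-- Existence of a minimizer of the negative ELBO: if `f : ℝ^d → ℝ` is continuous with
quadratic growth `f(x) ≥ c₁‖x‖² - c₂` and `p` is a standardized, spherically symmetric
probability density on `ℝ^d`, then `L(μ,Σ) = E_{z∼p}[f(μ + Σz)] - log det Σ` attains a
global minimum over `ℝ^d × S^d_{++}`. -/
theorem stmt5 (d : ℕ) (f : (Fin d → ℝ) → ℝ) (hf : Continuous f)
    (c₁ c₂ : ℝ) (hc₁ : 0 < c₁)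
    (hgrowth : ∀ x : Fin d → ℝ, c₁ * (∑ i, (x i) ^ 2) - c₂ ≤ f x)
    (p : (Fin d → ℝ) → ℝ)
    (hp_nonneg : ∀ x, 0 ≤ p x) (hp_pdf : ∫ x, p x = 1) (hp_int : Integrable p)
    (hp_rad : ∀ x y : Fin d → ℝ, (∑ i, (x i) ^ 2) = (∑ i, (y i) ^ 2) → p x = p y)
    (hint1 : ∀ i : Fin d, Integrable (fun z : Fin d → ℝ => z i * p z))
    (hint2 : ∀ i j : Fin d, Integrable (fun z : Fin d → ℝ => z i * z j * p z))
    (hmean : ∀ i : Fin d, ∫ z : Fin d → ℝ, z i * p z = 0)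
    (hvar : ∀ i : Fin d, ∫ z : Fin d → ℝ, (z i) ^ 2 * p z = 1)
    (hcov : ∀ i j : Fin d, i ≠ j → ∫ z : Fin d → ℝ, z i * z j * p z = 0)
    (hfint : ∀ (μ : Fin d → ℝ) (S : Matrix (Fin d) (Fin d) ℝ), S.PosDef →
      Integrable (fun z : Fin d → ℝ => f (μ + S.mulVec z) * p z)) :
    ∃ (μs : Fin d → ℝ) (Ss : Matrix (Fin d) (Fin d) ℝ), Ss.PosDef ∧
      ∀ (μ : Fin d → ℝ) (S : Matrix (Fin d) (Fin d) ℝ), S.PosDef →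
        (∫ z : Fin d → ℝ, f (μs + Ss.mulVec z) * p z) - Real.log Ss.det
          ≤ (∫ z : Fin d → ℝ, f (μ + S.mulVec z) * p z) - Real.log S.det :=
  stmt5_general d f hf c₁ c₂ hc₁ hgrowth p hp_nonneg hp_pdf hp_int hint1 hint2 hmean hvar hcov hfint
end

section
/- Let F : ℝ^D → ℝ be differentiable with minimizer θ*, let Λ be a positive definite diagonal matrix, and let g be an unbiased estimator of ∇F satisfying E‖g(θ)‖_Λ² ≤ a‖θ - θ*‖²_{Λ^{-1}} + b for all θ. Let g^N(θ) = (1/N) ∑_{i=1}^N g_i(θ) be the average of N i.i.d. copies. Then E‖g^N(θ)‖_Λ² ≤ (a/N)‖θ - θ*‖²_{Λ^{-1}} + b/N + ((N-1)/N)‖∇F(θ)‖_Λ². -/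
/-!
Expanding `‖∑ᵢ gᵢ‖²_Λ` bilinearly gives `N` diagonal terms `E‖gᵢ‖²_Λ`, each bounded by the
Blum–Gladyshev condition, and `N(N-1)` cross terms `E⟨gᵢ, Λ gⱼ⟩`, each equal to `‖∇F(θ)‖²_Λ`
because independent integrable variables satisfy `E B(X, Y) = B(E X, E Y)` for continuous
bilinear `B`. Dividing by `N²` gives the bound.
-/

open MeasureTheory ProbabilityTheory

section PairwiseIndependentSum

variable {Ω E ι : Type*} {mΩ : MeasurableSpace Ω} {μ : Measure Ω}
  [NormedAddCommGroup E] [NormedSpace ℝ E] [CompleteSpace E] [MeasurableSpace E] [BorelSpace E]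
  [Fintype ι]

theorem integral_bilin_sum_sum_of_pairwise_indepFun (B : E →L[ℝ] E →L[ℝ] ℝ) {X : ι → Ω → E}
    (hindep : Pairwise fun i j => IndepFun (X i) (X j) μ) (hint : ∀ i, Integrable (X i) μ)
    (hdiag : ∀ i, Integrable (fun ω => B (X i ω) (X i ω)) μ) {m : E} (hmean : ∀ i, μ[X i] = m) :
    ∫ ω, B (∑ i, X i ω) (∑ i, X i ω) ∂μ
      = ∑ i, ∫ ω, B (X i ω) (X i ω) ∂μ + Fintype.card ι * (Fintype.card ι - 1) * B m m := by
  classical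
  have hcross : ∀ i j, i ≠ j → ∫ ω, B (X i ω) (X j ω) ∂μ = B m m := fun i j hij => by
    rw [(hindep hij).integral_bilin (hint i) (hint j), hmean, hmean]
  have hintegrable : ∀ i j, Integrable (fun ω => B (X i ω) (X j ω)) μ := fun i j => by
    rcases eq_or_ne i j with rfl | hij
    · exact hdiag i
    · exact (hindep hij).integrable_bilin (hint i) (hint j) B
  have hcolumn : ∀ i, ∑ j, ∫ ω, B (X j ω) (X i ω) ∂μ
      = ∫ ω, B (X i ω) (X i ω) ∂μ + (Fintype.card ι - 1) * B m m := fun i => by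
    rw [← Finset.add_sum_erase _ _ (Finset.mem_univ i),
      Finset.sum_congr rfl fun j hj => hcross j i (Finset.ne_of_mem_erase hj),
      Finset.sum_erase_eq_sub (Finset.mem_univ i), Finset.sum_const, Finset.card_univ,
      nsmul_eq_mul, sub_one_mul]
  simp only [map_sum, sum_apply]
  rw [integral_finsetSum _ fun i _ => integrable_finsetSum _ fun j _ => hintegrable j i]
  simp only [integral_finsetSum _ fun j _ => hintegrable j _, hcolumn, Finset.sum_add_distrib,
    Finset.sum_const, Finset.card_univ, nsmul_eq_mul, mul_assoc]

end PairwiseIndependentSum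

section WeightedInner

variable {κ : Type*} [Fintype κ]

noncomputable def weightedInner (Λ : κ → ℝ) :
    EuclideanSpace ℝ κ →L[ℝ] EuclideanSpace ℝ κ →L[ℝ] ℝ :=
  ∑ l, Λ l • (EuclideanSpace.proj l).smulRight (EuclideanSpace.proj l)

theorem weightedInner_apply (Λ : κ → ℝ) (u v : EuclideanSpace ℝ κ) :
    weightedInner Λ u v = ∑ l, Λ l * (u l * v l) := by
  simp [weightedInner]

theorem weightedInner_self (Λ : κ → ℝ) (v : EuclideanSpace ℝ κ) :
    weightedInner Λ v v = ∑ l, Λ l * v l ^ 2 := by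
  simp [weightedInner_apply, sq]

end WeightedInner

theorem stmt9_general {Ω : Type*} [MeasurableSpace Ω] (P : Measure Ω)
    (D N : ℕ) (hN : 0 < N)
    (gradF : EuclideanSpace ℝ (Fin D) → EuclideanSpace ℝ (Fin D))
    (θstar : EuclideanSpace ℝ (Fin D))
    (Λ : Fin D → ℝ)
    (a b : ℝ)
    (θ : EuclideanSpace ℝ (Fin D))
    (g : Fin N → Ω → EuclideanSpace ℝ (Fin D))
    (hindep : iIndepFun g P)
    (hint : ∀ i, Integrable (g i) P)
    (hint2 : ∀ i, Integrable (fun ω => ∑ l, Λ l * (g i ω l) ^ 2) P)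
    (hunbiased : ∀ i, ∫ ω, g i ω ∂P = gradF θ)
    (hBG : ∀ i, ∫ ω, ∑ l, Λ l * (g i ω l) ^ 2 ∂P
        ≤ a * ∑ l, (Λ l)⁻¹ * (θ l - θstar l) ^ 2 + b) :
    ∫ ω, ∑ l, Λ l * (((N : ℝ)⁻¹ • ∑ i, g i ω) l) ^ 2 ∂P
      ≤ a / N * ∑ l, (Λ l)⁻¹ * (θ l - θstar l) ^ 2 + b / N
          + ((N : ℝ) - 1) / N * ∑ l, Λ l * (gradF θ l) ^ 2 := by
  set S := ∑ l, (Λ l)⁻¹ * (θ l - θstar l) ^ 2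
  simp only [← weightedInner_self] at hint2 hBG ⊢
  have hexpand := integral_bilin_sum_sum_of_pairwise_indepFun (weightedInner Λ)
    (fun i j hij => hindep.indepFun hij) hint hint2 hunbiased
  simp only [map_smul, smul_apply, smul_eq_mul, ← mul_assoc]
  rw [integral_const_mul, hexpand, Fintype.card_fin]
  have hdiag : ∑ i, ∫ ω, weightedInner Λ (g i ω) (g i ω) ∂P ≤ N * (a * S + b) :=
    (Finset.sum_le_card_nsmul _ _ _ fun i _ => hBG i).trans_eq (by simp [mul_add])
  have hNpos : (0 : ℝ) < N := Nat.cast_pos.mpr hN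
  calc (N : ℝ)⁻¹ * (N : ℝ)⁻¹ * (∑ i, ∫ ω, weightedInner Λ (g i ω) (g i ω) ∂P
        + N * (N - 1) * weightedInner Λ (gradF θ) (gradF θ))
      ≤ (N : ℝ)⁻¹ * (N : ℝ)⁻¹ * (N * (a * S + b)
        + N * (N - 1) * weightedInner Λ (gradF θ) (gradF θ)) := by gcongr
    _ = a / N * S + b / N + ((N : ℝ) - 1) / N * weightedInner Λ (gradF θ) (gradF θ) := by
      field_simp

/-- Variance reduction for minibatch gradient estimators under the Blum–Gladyshev condition:
if `g_1, …, g_N` are i.i.d. unbiased estimators of `∇F(θ)` with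
`E‖g_i(θ)‖_Λ² ≤ a‖θ - θ*‖²_{Λ⁻¹} + b`, then the minibatch average `g^N = (1/N)∑ g_i` satisfies
`E‖g^N(θ)‖_Λ² ≤ (a/N)‖θ - θ*‖²_{Λ⁻¹} + b/N + ((N-1)/N)‖∇F(θ)‖_Λ²`. -/
theorem stmt9 {Ω : Type*} [MeasurableSpace Ω] (P : Measure Ω) [IsProbabilityMeasure P]
    (D N : ℕ) (hN : 0 < N)
    (F : EuclideanSpace ℝ (Fin D) → ℝ)
    (gradF : EuclideanSpace ℝ (Fin D) → EuclideanSpace ℝ (Fin D))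
    (hF : ∀ θ', HasGradientAt F (gradF θ') θ')
    (θstar : EuclideanSpace ℝ (Fin D)) (hmin : ∀ θ', F θstar ≤ F θ')
    (Λ : Fin D → ℝ) (hΛ : ∀ j, 0 < Λ j)
    (a b : ℝ) (ha : 0 ≤ a) (hb : 0 ≤ b)
    (θ : EuclideanSpace ℝ (Fin D))
    (g : Fin N → Ω → EuclideanSpace ℝ (Fin D))
    (hmeas : ∀ i, Measurable (g i))
    (hindep : iIndepFun g P)
    (hident : ∀ i j, IdentDistrib (g i) (g j) P P)
    (hint : ∀ i, Integrable (g i) P)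
    (hint2 : ∀ i, Integrable (fun ω => ∑ l, Λ l * (g i ω l) ^ 2) P)
    (hunbiased : ∀ i, ∫ ω, g i ω ∂P = gradF θ)
    (hBG : ∀ i, ∫ ω, ∑ l, Λ l * (g i ω l) ^ 2 ∂P
        ≤ a * ∑ l, (Λ l)⁻¹ * (θ l - θstar l) ^ 2 + b) :
    ∫ ω, ∑ l, Λ l * (((N : ℝ)⁻¹ • ∑ i, g i ω) l) ^ 2 ∂P
      ≤ a / N * ∑ l, (Λ l)⁻¹ * (θ l - θstar l) ^ 2 + b / N
          + ((N : ℝ) - 1) / N * ∑ l, Λ l * (gradF θ l) ^ 2 :=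
  stmt9_general P D N hN gradF θstar Λ a b θ g hindep hint hint2 hunbiased hBG
end

section
/- (Robbins–Siegmund) Let (𝓕_k) be a filtration and (V_k), (a_k), (b_k), (c_k) nonnegative adapted sequences with E[V_{k+1} | 𝓕_k] ≤ (1 + a_k)V_k + b_k - c_k almost surely for all k. If ∑ a_k < ∞ and ∑ b_k < ∞ almost surely, then V_k converges almost surely to a finite limit and ∑ c_k < ∞ almost surely. -/
/-!
Dividing by `A_k = ∏_{j<k} (1 + a_j)` turns the hypothesis into the supermartingale inequality
for `W_k = V_k / A_k - ∑_{j<k} b_j / A_{j+1} + ∑_{j<k} c_j / A_{j+1}`. As `b` is only almost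
surely summable, `W` need not be integrable; freezing it once `∑_{j ≤ k} b_j` exceeds a level `M`
gives an integrable supermartingale bounded below by `-M`, which converges almost surely and
agrees with `W` on `{∑ b ≤ M}`. Letting `M` run through `ℕ`, `W` converges almost surely, and
since `A_k` has a finite limit, so does `V_k = A_k W_k + A_k ∑_{j<k} (b_j - c_j) / A_{j+1}`,
while the bound `A_{j+1} ≤ sup A` turns boundedness of `∑ c_j / A_{j+1}` into `∑ c_j < ∞`.
-/

open MeasureTheory Filter Finset Topology

namespace MeasureTheory

variable {Ω : Type*} {mΩ : MeasurableSpace Ω} {μ : Measure Ω} {ℱ : Filtration ℕ mΩ}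

theorem Supermartingale.exists_ae_tendsto_of_nonneg [IsFiniteMeasure μ] {f : ℕ → Ω → ℝ}
    (hf : Supermartingale f ℱ μ) (hf0 : ∀ n ω, 0 ≤ f n ω) :
    ∀ᵐ ω ∂μ, ∃ l, Tendsto (fun n => f n ω) atTop (𝓝 l) := by
  have hbdd : ∀ n, eLpNorm (-f n) 1 μ ≤ ENNReal.ofReal (∫ ω, f 0 ω ∂μ) := fun n => by
    rw [eLpNorm_neg, eLpNorm_one_eq_lintegral_enorm,
      ← ofReal_integral_norm_eq_lintegral_enorm (hf.integrable n)]
    refine ENNReal.ofReal_le_ofReal ?_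
    simp_rw [Real.norm_of_nonneg (hf0 n _)]
    simpa using hf.setIntegral_le (Nat.zero_le n) MeasurableSet.univ
  filter_upwards [hf.neg.exists_ae_tendsto_of_bdd hbdd] with ω ⟨l, hl⟩
  exact ⟨-l, by simpa using hl.neg⟩

theorem Supermartingale.exists_ae_tendsto_of_bddBelow [IsFiniteMeasure μ] {f : ℕ → Ω → ℝ}
    (hf : Supermartingale f ℱ μ) {K : ℝ} (hK : ∀ n ω, K ≤ f n ω) :
    ∀ᵐ ω ∂μ, ∃ l, Tendsto (fun n => f n ω) atTop (𝓝 l) := by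
  filter_upwards [(hf.sub_martingale (martingale_const ℱ μ K)).exists_ae_tendsto_of_nonneg
    fun n ω => sub_nonneg.2 (hK n ω)] with ω ⟨l, hl⟩
  exact ⟨l + K, by simpa using hl.add_const K⟩

theorem condExp_mul_add_ae_le {m : MeasurableSpace Ω} {X Y g h : Ω → ℝ} (hm : m ≤ mΩ)
    [SigmaFinite (μ.trim hm)] (hg : StronglyMeasurable[m] g) (hg0 : 0 ≤ g)
    (hh : StronglyMeasurable[m] h)
    (hgX : Integrable (g * X) μ) (hX : Integrable X μ) (hh_int : Integrable h μ)
    (hXY : μ[X|m] ≤ᵐ[μ] Y) : μ[g * X + h|m] ≤ᵐ[μ] g * Y + h := by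
  filter_upwards [condExp_add hgX hh_int m, condExp_mul_of_stronglyMeasurable_left hg hgX hX,
    hXY] with ω hadd hmul hω
  rw [hadd, Pi.add_apply, hmul, condExp_of_stronglyMeasurable hm hh hh_int]
  simp only [Pi.mul_apply, Pi.add_apply]
  gcongr
  exact hg0 ω

end MeasureTheory

namespace RobbinsSiegmund

variable {Ω : Type*}

noncomputable def compound (a : ℕ → Ω → ℝ) (k : ℕ) (ω : Ω) : ℝ :=
  ∏ j ∈ range k, (1 + a j ω)

noncomputable def discountedSum (a x : ℕ → Ω → ℝ) (k : ℕ) (ω : Ω) : ℝ :=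
  ∑ j ∈ range k, x j ω / compound a (j + 1) ω

noncomputable def compensated (V a b c : ℕ → Ω → ℝ) (k : ℕ) (ω : Ω) : ℝ :=
  V k ω / compound a k ω - discountedSum a b k ω + discountedSum a c k ω

noncomputable def stopped (V a b c : ℕ → Ω → ℝ) (M : ℝ) : ℕ → Ω → ℝ
  | 0 => compensated V a b c 0
  | k + 1 => fun ω =>
      if ∑ j ∈ range (k + 1), b j ω ≤ M then compensated V a b c (k + 1) ω
      else stopped V a b c M k ω

/-- `stepSlope` and `stepIntercept` are known at time `k`, so conditioning
`stopped (k + 1) = stepSlope * V (k + 1) + stepIntercept` on `ℱ k` only uses the hypothesis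
on `V`. -/
noncomputable def stepSlope (a b : ℕ → Ω → ℝ) (M : ℝ) (k : ℕ) : Ω → ℝ :=
  {ω | ∑ j ∈ range (k + 1), b j ω ≤ M}.piecewise (fun ω => (compound a (k + 1) ω)⁻¹) 0

noncomputable def stepIntercept (V a b c : ℕ → Ω → ℝ) (M : ℝ) (k : ℕ) : Ω → ℝ :=
  {ω | ∑ j ∈ range (k + 1), b j ω ≤ M}.piecewise
    (discountedSum a c (k + 1) - discountedSum a b (k + 1)) (stopped V a b c M k)

variable {V a b c x : ℕ → Ω → ℝ} {M : ℝ} {k : ℕ} {ω : Ω}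

lemma stopped_succ : stopped V a b c M (k + 1) ω =
    if ∑ j ∈ range (k + 1), b j ω ≤ M then compensated V a b c (k + 1) ω
    else stopped V a b c M k ω := rfl

@[simp]
lemma compound_zero : compound a 0 ω = 1 := by simp [compound]

lemma compound_succ : compound a (k + 1) ω = compound a k ω * (1 + a k ω) := by
  simp [compound, prod_range_succ]

lemma one_le_compound (ha : ∀ j, 0 ≤ a j ω) : 1 ≤ compound a k ω :=
  one_le_prod fun j _ => le_add_of_nonneg_right (ha j)

lemma compound_pos (ha : ∀ j, 0 ≤ a j ω) : 0 < compound a k ω :=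
  zero_lt_one.trans_le (one_le_compound ha)

lemma tendsto_compound (hsa : Summable fun j => a j ω) :
    Tendsto (fun k => compound a k ω) atTop (𝓝 (∏' j, (1 + a j ω))) :=
  (Real.multipliable_one_add_of_summable hsa).tendsto_prod_tprod_nat

lemma discountedSum_succ :
    discountedSum a x (k + 1) ω = discountedSum a x k ω + x k ω / compound a (k + 1) ω :=
  sum_range_succ _ _

lemma discountedSum_nonneg (ha : ∀ j, 0 ≤ a j ω) (hx : ∀ j, 0 ≤ x j ω) :
    0 ≤ discountedSum a x k ω :=
  sum_nonneg fun j _ => div_nonneg (hx j) (compound_pos ha).le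

lemma discountedSum_le_sum (ha : ∀ j, 0 ≤ a j ω) (hx : ∀ j, 0 ≤ x j ω) :
    discountedSum a x k ω ≤ ∑ j ∈ range k, x j ω :=
  sum_le_sum fun j _ => div_le_self (hx j) (one_le_compound ha)

lemma summable_div_compound (ha : ∀ j, 0 ≤ a j ω) (hx : ∀ j, 0 ≤ x j ω)
    (hsx : Summable fun j => x j ω) : Summable fun j => x j ω / compound a (j + 1) ω :=
  hsx.of_nonneg_of_le (fun j => div_nonneg (hx j) (compound_pos ha).le)
    fun j => div_le_self (hx j) (one_le_compound ha)

lemma compensated_eq (ha : ∀ j, 0 ≤ a j ω) :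
    compensated V a b c k ω = ((1 + a k ω) * V k ω + b k ω - c k ω) / compound a (k + 1) ω
      - discountedSum a b (k + 1) ω + discountedSum a c (k + 1) ω := by
  have hA := (compound_pos (k := k) ha).ne'
  have ha' : 1 + a k ω ≠ 0 := by linarith [ha k]
  rw [compensated, discountedSum_succ, discountedSum_succ, compound_succ]
  field_simp
  ring

lemma compensated_le (hV : ∀ j, 0 ≤ V j ω) (ha : ∀ j, 0 ≤ a j ω) (hb : ∀ j, 0 ≤ b j ω)
    (hc : ∀ j, 0 ≤ c j ω) :
    compensated V a b c k ω ≤ ∑ j ∈ range (k + 1), (V j ω + c j ω) := by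
  have hVc : ∑ j ∈ range k, c j ω ≤ ∑ j ∈ range k, (V j ω + c j ω) :=
    sum_le_sum fun j _ => le_add_of_nonneg_left (hV j)
  rw [compensated, sum_range_succ]
  linarith [div_le_self (hV k) (one_le_compound (k := k) ha), hc k,
    discountedSum_le_sum (k := k) ha hc, discountedSum_nonneg (k := k) ha hb]

lemma stopped_eq_compensated (hb : ∀ j, 0 ≤ b j ω) (h : ∑ j ∈ range (k + 1), b j ω ≤ M) :
    stopped V a b c M k ω = compensated V a b c k ω := by
  cases k with
  | zero => rfl
  | succ k =>
    have : ∑ j ∈ range (k + 1), b j ω ≤ M :=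
      (sum_le_sum_of_subset_of_nonneg (range_mono (k + 1).le_succ) fun j _ _ => hb j).trans h
    simp [stopped_succ, this]

lemma neg_le_stopped (hM : 0 ≤ M) (hV : ∀ j, 0 ≤ V j ω) (ha : ∀ j, 0 ≤ a j ω)
    (hb : ∀ j, 0 ≤ b j ω) (hc : ∀ j, 0 ≤ c j ω) : -M ≤ stopped V a b c M k ω := by
  induction k with
  | zero =>
    have : stopped V a b c M 0 ω = V 0 ω := by simp [stopped, compensated, discountedSum]
    linarith [hV 0]
  | succ k ih =>
    rw [stopped_succ]
    split_ifs with h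
    · have := discountedSum_le_sum (k := k + 1) ha hb
      have := discountedSum_nonneg (k := k + 1) ha hc
      have := div_nonneg (hV (k + 1)) (compound_pos (k := k + 1) ha).le
      rw [compensated]
      linarith
    · exact ih

lemma stopped_le (hV : ∀ j, 0 ≤ V j ω) (ha : ∀ j, 0 ≤ a j ω) (hb : ∀ j, 0 ≤ b j ω)
    (hc : ∀ j, 0 ≤ c j ω) : stopped V a b c M k ω ≤ ∑ j ∈ range (k + 1), (V j ω + c j ω) := by
  induction k with
  | zero => exact compensated_le hV ha hb hc
  | succ k ih =>
    rw [stopped_succ]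
    split_ifs
    · exact compensated_le hV ha hb hc
    · rw [sum_range_succ]
      linarith [hV (k + 1), hc (k + 1)]

lemma stopped_succ_eq_stepSlope_mul_add :
    stopped V a b c M (k + 1) = stepSlope a b M k * V (k + 1) + stepIntercept V a b c M k := by
  ext ω
  by_cases hω : ∑ j ∈ range (k + 1), b j ω ≤ M
  · simp only [stopped_succ, stepSlope, stepIntercept, Pi.add_apply, Pi.mul_apply, Pi.sub_apply,
      Set.piecewise_eq_of_mem _ _ _ (show ω ∈ {ω | ∑ j ∈ range (k + 1), b j ω ≤ M} from hω),
      if_pos hω, compensated]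
    ring
  · simp [stopped_succ, stepSlope, stepIntercept, hω]

lemma stepSlope_nonneg (ha : ∀ j, 0 ≤ a j ω) : 0 ≤ stepSlope a b M k ω := by
  by_cases hω : ∑ j ∈ range (k + 1), b j ω ≤ M
  · simpa [stepSlope, hω] using (compound_pos ha).le
  · simp [stepSlope, hω]

lemma stepSlope_le_one (ha : ∀ j, 0 ≤ a j ω) : stepSlope a b M k ω ≤ 1 := by
  by_cases hω : ∑ j ∈ range (k + 1), b j ω ≤ M
  · simpa [stepSlope, hω] using inv_le_one_of_one_le₀ (one_le_compound ha)
  · simp [stepSlope, hω]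

lemma stepSlope_mul_add_stepIntercept (ha : ∀ j, 0 ≤ a j ω) (hb : ∀ j, 0 ≤ b j ω) :
    stepSlope a b M k ω * ((1 + a k ω) * V k ω + b k ω - c k ω) + stepIntercept V a b c M k ω
      = stopped V a b c M k ω := by
  by_cases hω : ∑ j ∈ range (k + 1), b j ω ≤ M
  · simp only [stepSlope, stepIntercept, Pi.sub_apply,
      Set.piecewise_eq_of_mem _ _ _ (show ω ∈ {ω | ∑ j ∈ range (k + 1), b j ω ≤ M} from hω)]
    rw [stopped_eq_compensated hb hω, compensated_eq ha]
    ring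
  · simp [stepSlope, stepIntercept, hω]

lemma summable_discounted_of_tendsto_compensated (hV : ∀ j, 0 ≤ V j ω) (ha : ∀ j, 0 ≤ a j ω)
    (hb : ∀ j, 0 ≤ b j ω) (hc : ∀ j, 0 ≤ c j ω) (hsb : Summable fun j => b j ω) {l : ℝ}
    (hW : Tendsto (fun k => compensated V a b c k ω) atTop (𝓝 l)) :
    Summable fun j => c j ω / compound a (j + 1) ω := by
  obtain ⟨C, hC⟩ := hW.bddAbove_range
  refine summable_of_sum_range_le (c := C + ∑' j, b j ω)
    (fun j => div_nonneg (hc j) (compound_pos ha).le) fun k => ?_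
  have hWC : compensated V a b c k ω ≤ C := hC ⟨k, rfl⟩
  have hDb : discountedSum a b k ω ≤ ∑' j, b j ω :=
    (discountedSum_le_sum ha hb).trans (hsb.sum_le_tsum _ fun j _ => hb j)
  change discountedSum a c k ω ≤ _
  rw [compensated] at hWC
  linarith [div_nonneg (hV k) (compound_pos (k := k) ha).le]

theorem tendsto_and_summable_of_tendsto_compensated (hV : ∀ j, 0 ≤ V j ω)
    (ha : ∀ j, 0 ≤ a j ω) (hb : ∀ j, 0 ≤ b j ω) (hc : ∀ j, 0 ≤ c j ω)
    (hsa : Summable fun j => a j ω) (hsb : Summable fun j => b j ω) {l : ℝ}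
    (hW : Tendsto (fun k => compensated V a b c k ω) atTop (𝓝 l)) :
    (∃ l, Tendsto (fun k => V k ω) atTop (𝓝 l)) ∧ Summable fun k => c k ω := by
  have hDc := summable_discounted_of_tendsto_compensated hV ha hb hc hsb hW
  have hA := tendsto_compound hsa
  constructor
  · have hVA : Tendsto (fun k => V k ω / compound a k ω) atTop
        (𝓝 (l + ∑' j, b j ω / compound a (j + 1) ω - ∑' j, c j ω / compound a (j + 1) ω)) := by
      have hsplit : (fun k => V k ω / compound a k ω) = fun k =>
          compensated V a b c k ω + discountedSum a b k ω - discountedSum a c k ω := by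
        ext k
        rw [compensated]
        ring
      rw [hsplit]
      exact (hW.add (summable_div_compound ha hb hsb).hasSum.tendsto_sum_nat).sub
        hDc.hasSum.tendsto_sum_nat
    exact ⟨_, (hVA.mul hA).congr fun k => div_mul_cancel₀ _ (compound_pos ha).ne'⟩
  · obtain ⟨C, hC⟩ := hA.bddAbove_range
    refine (hDc.mul_right C).of_nonneg_of_le hc fun j => ?_
    calc c j ω = c j ω / compound a (j + 1) ω * compound a (j + 1) ω :=
          (div_mul_cancel₀ _ (compound_pos ha).ne').symm
      _ ≤ c j ω / compound a (j + 1) ω * C :=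
          mul_le_mul_of_nonneg_left (hC ⟨j + 1, rfl⟩) (div_nonneg (hc j) (compound_pos ha).le)

section Measurability

variable {mΩ : MeasurableSpace Ω} {ℱ : Filtration ℕ mΩ}

lemma measurable_compound (hada : Adapted ℱ a) {j : ℕ} (hj : j ≤ k + 1) :
    Measurable[ℱ k] (compound a j) :=
  Finset.measurable_prod _ fun i hi =>
    measurable_const.add ((hada i).mono (ℱ.mono (by grind)) le_rfl)

lemma measurable_discountedSum (hada : Adapted ℱ a) (hadx : Adapted ℱ x) {j : ℕ}
    (hj : j ≤ k + 1) : Measurable[ℱ k] (discountedSum a x j) :=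
  Finset.measurable_sum _ fun i hi =>
    ((hadx i).mono (ℱ.mono (by grind)) le_rfl).div
      (measurable_compound hada (by grind))

lemma measurableSet_sum_le (hadb : Adapted ℱ b) (M : ℝ) (k : ℕ) :
    MeasurableSet[ℱ k] {ω | ∑ j ∈ range (k + 1), b j ω ≤ M} :=
  measurableSet_le (Finset.measurable_sum _ fun i hi =>
    (hadb i).mono (ℱ.mono (by grind)) le_rfl) measurable_const

lemma adapted_compensated (hadV : Adapted ℱ V) (hada : Adapted ℱ a) (hadb : Adapted ℱ b)
    (hadc : Adapted ℱ c) : Adapted ℱ (compensated V a b c) := fun k =>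
  (((hadV k).div (measurable_compound hada k.le_succ)).sub
    (measurable_discountedSum hada hadb k.le_succ)).add
    (measurable_discountedSum hada hadc k.le_succ)

lemma adapted_stopped (hadV : Adapted ℱ V) (hada : Adapted ℱ a) (hadb : Adapted ℱ b)
    (hadc : Adapted ℱ c) (M : ℝ) : Adapted ℱ (stopped V a b c M) := by
  intro k
  induction k with
  | zero => exact adapted_compensated hadV hada hadb hadc 0
  | succ k ih =>
    exact Measurable.ite (ℱ.mono k.le_succ _ (measurableSet_sum_le hadb M k))
      (adapted_compensated hadV hada hadb hadc (k + 1)) (ih.mono (ℱ.mono k.le_succ) le_rfl)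

lemma measurable_stepSlope (hada : Adapted ℱ a) (hadb : Adapted ℱ b) (M : ℝ) (k : ℕ) :
    Measurable[ℱ k] (stepSlope a b M k) :=
  (measurable_compound hada le_rfl).inv.piecewise (measurableSet_sum_le hadb M k)
    measurable_const

lemma measurable_stepIntercept (hadV : Adapted ℱ V) (hada : Adapted ℱ a) (hadb : Adapted ℱ b)
    (hadc : Adapted ℱ c) (M : ℝ) (k : ℕ) : Measurable[ℱ k] (stepIntercept V a b c M k) :=
  ((measurable_discountedSum hada hadc le_rfl).sub
    (measurable_discountedSum hada hadb le_rfl)).piecewise (measurableSet_sum_le hadb M k)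
    (adapted_stopped hadV hada hadb hadc M k)

end Measurability

section Supermartingale

variable {mΩ : MeasurableSpace Ω} {ℱ : Filtration ℕ mΩ} {P : Measure Ω} [IsFiniteMeasure P]

lemma integrable_stopped (hadV : Adapted ℱ V) (hada : Adapted ℱ a) (hadb : Adapted ℱ b)
    (hadc : Adapted ℱ c) (hV : ∀ k ω, 0 ≤ V k ω) (ha : ∀ k ω, 0 ≤ a k ω)
    (hb : ∀ k ω, 0 ≤ b k ω) (hc : ∀ k ω, 0 ≤ c k ω) (hVint : ∀ k, Integrable (V k) P)
    (hcint : ∀ k, Integrable (c k) P) (hM : 0 ≤ M) (k : ℕ) :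
    Integrable (stopped V a b c M k) P := by
  refine Integrable.mono' (g := fun ω => ∑ j ∈ range (k + 1), (V j ω + c j ω) + M)
    ((integrable_finsetSum _ fun j _ => (hVint j).add (hcint j)).add (integrable_const M))
    ((adapted_stopped hadV hada hadb hadc M k).mono (ℱ.le k) le_rfl).aestronglyMeasurable
    (ae_of_all _ fun ω => ?_)
  have hlow := neg_le_stopped (k := k) hM (hV · ω) (ha · ω) (hb · ω) (hc · ω)
  have hup := stopped_le (k := k) (M := M) (hV · ω) (ha · ω) (hb · ω) (hc · ω)
  have hF : 0 ≤ ∑ j ∈ range (k + 1), (V j ω + c j ω) :=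
    sum_nonneg fun j _ => add_nonneg (hV j ω) (hc j ω)
  rw [Real.norm_eq_abs, abs_le]
  constructor <;> linarith

lemma supermartingale_stopped (hadV : Adapted ℱ V) (hada : Adapted ℱ a) (hadb : Adapted ℱ b)
    (hadc : Adapted ℱ c) (hV : ∀ k ω, 0 ≤ V k ω) (ha : ∀ k ω, 0 ≤ a k ω)
    (hb : ∀ k ω, 0 ≤ b k ω) (hc : ∀ k ω, 0 ≤ c k ω) (hVint : ∀ k, Integrable (V k) P)
    (hcint : ∀ k, Integrable (c k) P)
    (hineq : ∀ k, P[V (k + 1)|ℱ k] ≤ᵐ[P] fun ω => (1 + a k ω) * V k ω + b k ω - c k ω)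
    (hM : 0 ≤ M) : Supermartingale (stopped V a b c M) ℱ P := by
  have hint := integrable_stopped hadV hada hadb hadc hV ha hb hc hVint hcint hM
  refine supermartingale_nat
    (fun k => (adapted_stopped hadV hada hadb hadc M k).stronglyMeasurable) hint fun k => ?_
  have hslope := measurable_stepSlope hada hadb M k
  have hslopeV : Integrable (stepSlope a b M k * V (k + 1)) P :=
    (hVint (k + 1)).bdd_mul (hslope.mono (ℱ.le k) le_rfl).aestronglyMeasurable
      (ae_of_all _ fun ω => by
        rw [Real.norm_of_nonneg (stepSlope_nonneg (ha · ω))]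
        exact stepSlope_le_one (ha · ω))
  have hintercept : Integrable (stepIntercept V a b c M k) P := by
    have := (hint (k + 1)).sub hslopeV
    rwa [stopped_succ_eq_stepSlope_mul_add, add_sub_cancel_left] at this
  rw [stopped_succ_eq_stepSlope_mul_add]
  filter_upwards [condExp_mul_add_ae_le (ℱ.le k) hslope.stronglyMeasurable
    (fun ω => stepSlope_nonneg (ha · ω))
    (measurable_stepIntercept hadV hada hadb hadc M k).stronglyMeasurable hslopeV (hVint (k + 1))
    hintercept (hineq k)] with ω hω
  exact hω.trans_eq (stepSlope_mul_add_stepIntercept (ha · ω) (hb · ω))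

end Supermartingale

end RobbinsSiegmund

open RobbinsSiegmund in
/-- Robbins–Siegmund theorem: if `(V_k)`, `(a_k)`, `(b_k)`, `(c_k)` are nonnegative adapted
sequences with `E[V_{k+1} | 𝓕_k] ≤ (1 + a_k)V_k + b_k - c_k` a.s. for all `k`, and
`∑ a_k < ∞`, `∑ b_k < ∞` a.s., then `V_k` converges a.s. to a finite limit and
`∑ c_k < ∞` a.s. -/
theorem stmt16 {Ω : Type*} {mΩ : MeasurableSpace Ω} (P : Measure Ω) [IsProbabilityMeasure P]
    (ℱ : Filtration ℕ mΩ)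
    (V a b c : ℕ → Ω → ℝ)
    (hadV : Adapted ℱ V) (hada : Adapted ℱ a) (hadb : Adapted ℱ b) (hadc : Adapted ℱ c)
    (hV : ∀ k ω, 0 ≤ V k ω) (ha : ∀ k ω, 0 ≤ a k ω)
    (hb : ∀ k ω, 0 ≤ b k ω) (hc : ∀ k ω, 0 ≤ c k ω)
    (hVint : ∀ k, Integrable (V k) P) (hcint : ∀ k, Integrable (c k) P)
    (hineq : ∀ k, P[V (k + 1)|ℱ k]
        ≤ᵐ[P] fun ω => (1 + a k ω) * V k ω + b k ω - c k ω)
    (hsa : ∀ᵐ ω ∂P, Summable (fun k => a k ω))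
    (hsb : ∀ᵐ ω ∂P, Summable (fun k => b k ω)) :
    ∀ᵐ ω ∂P, (∃ l : ℝ, Tendsto (fun k => V k ω) atTop (nhds l)) ∧
      Summable (fun k => c k ω) := by
  have hconv : ∀ M : ℕ, ∀ᵐ ω ∂P, ∃ l, Tendsto (fun k => stopped V a b c M k ω) atTop (𝓝 l) :=
    fun M => (supermartingale_stopped hadV hada hadb hadc hV ha hb hc hVint hcint hineq
      M.cast_nonneg).exists_ae_tendsto_of_bddBelow
      fun k ω => neg_le_stopped M.cast_nonneg (hV · ω) (ha · ω) (hb · ω) (hc · ω)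
  filter_upwards [hsa, hsb, ae_all_iff.2 hconv] with ω hsaω hsbω hconvω
  obtain ⟨M, hM⟩ := exists_nat_ge (∑' j, b j ω)
  obtain ⟨l, hl⟩ := hconvω M
  refine tendsto_and_summable_of_tendsto_compensated (hV · ω) (ha · ω) (hb · ω) (hc · ω)
    hsaω hsbω (hl.congr fun k => stopped_eq_compensated (hb · ω) ?_)
  exact (hsbω.sum_le_tsum _ fun j _ => hb j ω).trans hM
end
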